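/- arXiv:2301.13821 — 2 statements merged into one kernel-verified Lean document; each statement's English description precedes it below -/
import Mathlib

section
/- Let G be a compact group acting continuously on a compact metric space M, let F: M → ℝ^K be a continuous G-invariant map that separates orbits (F(x) = F(y) implies x and y lie in the same G-orbit), and let f: M → ℝ be a continuous G-invariant function. Then for every ε > 0 there exists a continuous function g: ℝ^K → ℝ such that |f(x) − g(F(x))| ≤ ε for all x ∈ M. (In fact f = g ∘ F for some continuous g on the image F(M).) -/
/-!
Separation and invariance make `f` constant on the fibres of `F`. A continuous surjection from a
compact space onto a Hausdorff space is a quotient map, so `f` descends to a continuous function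
on the compact, hence closed, image `F(M)`; Tietze's theorem extends it to all of `ℝ^K`, giving
`f = g ∘ F` exactly.
-/

open Topology

universe u v

theorem MulAction.factorsThrough_of_separatesOrbits {G M α β : Type*} [Group G] [MulAction G M]
    {F : M → α} {f : M → β} (hFsep : ∀ x y : M, F x = F y → ∃ g : G, y = g • x)
    (hfinv : ∀ (g : G) (x : M), f (g • x) = f x) : Function.FactorsThrough f F := by
  intro x y hxy
  obtain ⟨g, rfl⟩ := hFsep x y hxy
  exact (hfinv g x).symm

section Descent

variable {X : Type*} {Y : Type u} {Z : Type v} [TopologicalSpace X] [CompactSpace X]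
  [TopologicalSpace Y] [TopologicalSpace Z] {F : X → Y} {f : X → Z}

theorem Continuous.exists_continuousMap_range_comp_eq [T2Space Y] (hF : Continuous F)
    (hf : Continuous f) (hfF : Function.FactorsThrough f F) :
    ∃ g : C(Set.range F, Z), g ∘ Set.rangeFactorization F = f := by
  let φ : C(X, Set.range F) := ⟨Set.rangeFactorization F, hF.rangeFactorization⟩
  have hφ : IsQuotientMap φ :=
    .of_surjective_continuous Set.rangeFactorization_surjective φ.continuous
  have hfφ : Function.FactorsThrough f φ := fun x y hxy ↦ hfF (Subtype.ext_iff.mp hxy)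
  exact ⟨hφ.lift ⟨f, hf⟩ hfφ, congrArg DFunLike.coe (hφ.lift_comp ⟨f, hf⟩ hfφ)⟩

theorem Continuous.exists_continuousMap_comp_eq [T4Space Y] [TietzeExtension.{u, v} Z]
    (hF : Continuous F) (hf : Continuous f) (hfF : Function.FactorsThrough f F) :
    ∃ g : C(Y, Z), g ∘ F = f := by
  obtain ⟨g₀, hg₀⟩ := hF.exists_continuousMap_range_comp_eq hf hfF
  obtain ⟨g, hg⟩ := g₀.exists_restrict_eq (isCompact_range hF).isClosed
  refine ⟨g, funext fun x ↦ ?_⟩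
  rw [← hg₀]
  exact congrFun (congrArg DFunLike.coe hg) (Set.rangeFactorization F x)

end Descent

theorem separation_implies_universality_general
    (G : Type*) [Group G]
    (M : Type*) [MetricSpace M] [CompactSpace M]
    [MulAction G M]
    (K : ℕ) (F : M → EuclideanSpace ℝ (Fin K)) (hFcont : Continuous F)
    (hFsep : ∀ x y : M, F x = F y → ∃ g : G, y = g • x)
    (f : M → ℝ) (hfcont : Continuous f)
    (hfinv : ∀ (g : G) (x : M), f (g • x) = f x) :
    ∀ ε > 0, ∃ g : EuclideanSpace ℝ (Fin K) → ℝ,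
      Continuous g ∧ ∀ x : M, |f x - g (F x)| ≤ ε := by
  intro ε hε
  obtain ⟨g, hg⟩ := hFcont.exists_continuousMap_comp_eq hfcont
    (MulAction.factorsThrough_of_separatesOrbits hFsep hfinv)
  refine ⟨g, g.continuous, fun x ↦ ?_⟩
  rw [← congrFun hg x, Function.comp_apply, sub_self, abs_zero]
  exact hε.le

/-- Separation implies universality: a continuous invariant function on a
compact space can be uniformly approximated by continuous functions of a
continuous separating invariant. -/
theorem separation_implies_universality
    (G : Type*) [Group G] [TopologicalSpace G] [CompactSpace G]
    [IsTopologicalGroup G]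
    (M : Type*) [MetricSpace M] [CompactSpace M]
    [MulAction G M] [ContinuousSMul G M]
    (K : ℕ) (F : M → EuclideanSpace ℝ (Fin K)) (hFcont : Continuous F)
    (hFinv : ∀ (g : G) (x : M), F (g • x) = F x)
    (hFsep : ∀ x y : M, F x = F y → ∃ g : G, y = g • x)
    (f : M → ℝ) (hfcont : Continuous f)
    (hfinv : ∀ (g : G) (x : M), f (g • x) = f x) :
    ∀ ε > 0, ∃ g : EuclideanSpace ℝ (Fin K) → ℝ,
      Continuous g ∧ ∀ x : M, |f x - g (F x)| ≤ ε :=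
  separation_implies_universality_general G M K F hFcont hFsep f hfcont hfinv
end

section
/- Let X = (x_1,…,x_n), Y = (y_1,…,y_n) ∈ ℝ^{d×n} and suppose the multisets of labeled Gram rows agree in the following strong sense: there exist indices i_1,…,i_r and j_1,…,j_r such that x_{i_1},…,x_{i_r} span the column span of X, ⟨x_{i_a}, x_{i_b}⟩ = ⟨y_{j_a}, y_{j_b}⟩ for all a,b, and there exists σ ∈ S_n with σ(i_a) = j_a and ⟨x_{i_a}, x_k⟩ = ⟨y_{j_a}, y_{σ(k)}⟩ for all a = 1,…,r and all k. If additionally y_{j_1},…,y_{j_r} span the column span of Y and the column spans of X and Y have equal dimension r, then there exists T ∈ O(d) with T x_k = y_{σ(k)} for all k. -/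
open Matrix

/-!
A configuration is determined up to isometry by its Gram matrix: `∑ cᵢ xᵢ ↦ ∑ cᵢ yᵢ` is
well defined and isometric on the span of the `xᵢ` as soon as `⟪xᵢ, xⱼ⟫ = ⟪yᵢ, yⱼ⟫`, since
`‖∑ cᵢ yᵢ‖ = ‖∑ cᵢ xᵢ‖`, and in finite dimension it extends to an isometry of the whole space.
Applied to the anchors `x_{i_a}` and `y_{σ(i_a)} = y_{j_a}` this gives an isometry `T` with
`T x_{i_a} = y_{j_a}`. For any `k`, the defect `T x_k - y_{σ(k)}` lies in `span {y_{j_a}}` and is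
orthogonal to every `y_{j_a}`, because `⟪y_{j_a}, T x_k⟫ = ⟪x_{i_a}, x_k⟫ = ⟪y_{j_a}, y_{σ(k)}⟫`;
so it vanishes.
-/

open Submodule Set
open scoped InnerProductSpace

section InnerProductSpace

variable {𝕜 E F ι κ : Type*} [RCLike 𝕜]
  [NormedAddCommGroup E] [InnerProductSpace 𝕜 E] [NormedAddCommGroup F] [InnerProductSpace 𝕜 F]

theorem inner_linearCombination_eq_of_inner_eq {u : ι → E} {v : ι → F}
    (h : ∀ i j, ⟪u i, u j⟫_𝕜 = ⟪v i, v j⟫_𝕜) (c c' : ι →₀ 𝕜) :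
    ⟪Finsupp.linearCombination 𝕜 u c, Finsupp.linearCombination 𝕜 u c'⟫_𝕜 =
      ⟪Finsupp.linearCombination 𝕜 v c, Finsupp.linearCombination 𝕜 v c'⟫_𝕜 := by
  simp [Finsupp.linearCombination_apply, Finsupp.sum, inner_sum, sum_inner, inner_smul_left,
    inner_smul_right, h]

theorem exists_linearIsometry_span_of_inner_eq {u : ι → E} {v : ι → F}
    (h : ∀ i j, ⟪u i, u j⟫_𝕜 = ⟪v i, v j⟫_𝕜) :
    ∃ L : span 𝕜 (range u) →ₗᵢ[𝕜] F, ∀ i, L ⟨u i, subset_span (mem_range_self i)⟩ = v i := by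
  set U := Finsupp.linearCombination 𝕜 u
  set V := Finsupp.linearCombination 𝕜 v
  have hUV := inner_linearCombination_eq_of_inner_eq h
  have hker : LinearMap.ker U ≤ LinearMap.ker V := fun c hc => by
    rw [LinearMap.mem_ker] at hc ⊢
    rw [← inner_self_eq_zero (𝕜 := 𝕜), ← hUV, hc, inner_zero_left]
  let g : LinearMap.range U →ₗ[𝕜] F := (LinearMap.ker U).liftQ V hker ∘ₗ U.quotKerEquivRange.symm
  have hg : ∀ c, g ⟨U c, LinearMap.mem_range_self U c⟩ = V c := fun c => by
    simp [g, LinearMap.quotKerEquivRange_symm_apply_image]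
  have hg_inner : ∀ w w' : LinearMap.range U, ⟪g w, g w'⟫_𝕜 = ⟪w, w'⟫_𝕜 := by
    rintro ⟨_, c, rfl⟩ ⟨_, c', rfl⟩
    rw [hg, hg, Submodule.coe_inner, hUV]
  refine ⟨(g.isometryOfInner hg_inner).comp
    (LinearIsometryEquiv.ofEq _ _ (Finsupp.range_linearCombination 𝕜).symm).toLinearIsometry,
    fun i => ?_⟩
  have hgi := hg (Finsupp.single i 1)
  simp only [U, V, Finsupp.linearCombination_single, one_smul] at hgi
  exact hgi

theorem eq_zero_of_mem_span_of_inner_eq_zero {w : κ → E} {z : E} (hz : z ∈ span 𝕜 (range w))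
    (h : ∀ a, ⟪w a, z⟫_𝕜 = 0) : z = 0 := by
  have hle : span 𝕜 (range w) ≤ (𝕜 ∙ z)ᗮ :=
    span_le.mpr (range_subset_iff.mpr fun a => mem_orthogonal_singleton_iff_inner_left.mpr (h a))
  exact inner_self_eq_zero.mp (mem_orthogonal_singleton_iff_inner_right.mp (hle hz))

variable [FiniteDimensional 𝕜 E]

theorem exists_linearIsometryEquiv_apply_eq_of_inner_eq {u v : ι → E}
    (h : ∀ i j, ⟪u i, u j⟫_𝕜 = ⟪v i, v j⟫_𝕜) : ∃ T : E ≃ₗᵢ[𝕜] E, ∀ i, T (u i) = v i := by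
  obtain ⟨L, hL⟩ := exists_linearIsometry_span_of_inner_eq h
  exact ⟨L.extend.toLinearIsometryEquiv rfl, fun i => (L.extend_apply _).trans (hL i)⟩

theorem exists_linearIsometryEquiv_apply_eq_of_inner_eq_of_mem_span {x y : ι → E} (s : κ → ι)
    (hx : ∀ k, x k ∈ span 𝕜 (range (x ∘ s))) (hy : ∀ k, y k ∈ span 𝕜 (range (y ∘ s)))
    (h : ∀ a k, ⟪x (s a), x k⟫_𝕜 = ⟪y (s a), y k⟫_𝕜) : ∃ T : E ≃ₗᵢ[𝕜] E, ∀ k, T (x k) = y k := by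
  obtain ⟨T, hT⟩ := exists_linearIsometryEquiv_apply_eq_of_inner_eq (u := x ∘ s) (v := y ∘ s)
    fun a b => h a (s b)
  refine ⟨T, fun k => ?_⟩
  have hTx : T (x k) ∈ span 𝕜 (range (y ∘ s)) := by
    have := mem_map_of_mem (f := (T : E →ₗ[𝕜] E)) (hx k)
    rwa [map_span, ← range_comp, show ⇑(T : E →ₗ[𝕜] E) ∘ x ∘ s = y ∘ s from funext hT] at this
  refine sub_eq_zero.mp (eq_zero_of_mem_span_of_inner_eq_zero (sub_mem hTx (hy k)) fun a => ?_)
  calc ⟪y (s a), T (x k) - y k⟫_𝕜 = ⟪T (x (s a)), T (x k)⟫_𝕜 - ⟪y (s a), y k⟫_𝕜 := by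
        rw [inner_sub_right, ← show T (x (s a)) = y (s a) from hT a]
    _ = 0 := by rw [T.inner_map_map, h, sub_self]

end InnerProductSpace

theorem WithLp.toLp_mem_span_range {K V ι : Type*} [Semiring K] [AddCommGroup V] [Module K V]
    (p : ENNReal) {w : ι → V} {v : V} (hv : v ∈ span K (range w)) :
    WithLp.toLp p v ∈ span K (range fun i => WithLp.toLp p (w i)) := by
  have := mem_map_of_mem (f := (WithLp.linearEquiv p K V).symm.toLinearMap) hv
  rwa [map_span, ← range_comp] at this

theorem LinearIsometryEquiv.exists_mem_orthogonalGroup_mulVec_eq {ι : Type*} [Fintype ι]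
    [DecidableEq ι] (f : EuclideanSpace ℝ ι ≃ₗᵢ[ℝ] EuclideanSpace ℝ ι) :
    ∃ T ∈ orthogonalGroup ι ℝ, ∀ v, T *ᵥ v = (f (WithLp.toLp 2 v)).ofLp := by
  set b := (EuclideanSpace.basisFun ι ℝ).toBasis
  refine ⟨LinearMap.toMatrix b b f.toLinearEquiv, f.toMatrix_mem_unitaryGroup _ _, fun v => ?_⟩
  have hrepr : ∀ w, ⇑(b.repr w) = w.ofLp := fun w => funext fun i => by simp [b]
  have := LinearMap.toMatrix_mulVec_repr b b f.toLinearEquiv.toLinearMap (WithLp.toLp 2 v)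
  rwa [hrepr, hrepr] at this

theorem spanning_gram_match_implies_orthogonal_general
    (d n r : ℕ) (X Y : Fin n → (Fin d → ℝ))
    (ii jj : Fin r → Fin n) (σ : Equiv.Perm (Fin n))
    (hspanX : Submodule.span ℝ (Set.range (X ∘ ii))
      = Submodule.span ℝ (Set.range X))
    (hσ : ∀ a, σ (ii a) = jj a)
    (hmatch : ∀ a k, X (ii a) ⬝ᵥ X k = Y (jj a) ⬝ᵥ Y (σ k))
    (hspanY : Submodule.span ℝ (Set.range (Y ∘ jj))
      = Submodule.span ℝ (Set.range Y)) :
    ∃ T : Matrix (Fin d) (Fin d) ℝ,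
      T ∈ Matrix.orthogonalGroup (Fin d) ℝ ∧
      ∀ k, T.mulVec (X k) = Y (σ k) := by
  let x : Fin n → EuclideanSpace ℝ (Fin d) := fun k => WithLp.toLp 2 (X k)
  let y : Fin n → EuclideanSpace ℝ (Fin d) := fun k => WithLp.toLp 2 (Y (σ k))
  have hjj : Y ∘ jj = (Y ∘ σ) ∘ ii := funext fun a => by simp [hσ]
  have hx : ∀ k, x k ∈ span ℝ (range (x ∘ ii)) := fun k => by
    refine WithLp.toLp_mem_span_range 2 (w := X ∘ ii) ?_
    rw [hspanX]
    exact subset_span (mem_range_self k)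
  have hy : ∀ k, y k ∈ span ℝ (range (y ∘ ii)) := fun k => by
    refine WithLp.toLp_mem_span_range 2 (w := (Y ∘ σ) ∘ ii) ?_
    rw [← hjj, hspanY]
    exact subset_span (mem_range_self (σ k))
  have hinner : ∀ a k, ⟪x (ii a), x k⟫_ℝ = ⟪y (ii a), y k⟫_ℝ := fun a k => by
    simp only [x, y, EuclideanSpace.inner_toLp_toLp, star_trivial, hσ]
    rw [dotProduct_comm, hmatch, dotProduct_comm]
  obtain ⟨f, hf⟩ := exists_linearIsometryEquiv_apply_eq_of_inner_eq_of_mem_span ii hx hy hinner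
  obtain ⟨T, hT, hTf⟩ := f.exists_mem_orthogonalGroup_mulVec_eq
  exact ⟨T, hT, fun k => by rw [hTf, hf]⟩

/-- Matching inner products with a spanning set determines the configuration
up to an orthogonal transformation. -/
theorem spanning_gram_match_implies_orthogonal
    (d n r : ℕ) (X Y : Fin n → (Fin d → ℝ))
    (ii jj : Fin r → Fin n) (σ : Equiv.Perm (Fin n))
    (hspanX : Submodule.span ℝ (Set.range (X ∘ ii))
      = Submodule.span ℝ (Set.range X))
    (hgram : ∀ a b, X (ii a) ⬝ᵥ X (ii b) = Y (jj a) ⬝ᵥ Y (jj b))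
    (hσ : ∀ a, σ (ii a) = jj a)
    (hmatch : ∀ a k, X (ii a) ⬝ᵥ X k = Y (jj a) ⬝ᵥ Y (σ k))
    (hspanY : Submodule.span ℝ (Set.range (Y ∘ jj))
      = Submodule.span ℝ (Set.range Y))
    (hrX : Module.finrank ℝ (Submodule.span ℝ (Set.range X)) = r)
    (hrY : Module.finrank ℝ (Submodule.span ℝ (Set.range Y)) = r) :
    ∃ T : Matrix (Fin d) (Fin d) ℝ,
      T ∈ Matrix.orthogonalGroup (Fin d) ℝ ∧
      ∀ k, T.mulVec (X k) = Y (σ k) :=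
  spanning_gram_match_implies_orthogonal_general d n r X Y ii jj σ hspanX hσ hmatch hspanY
end
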